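/- Let R be an integral domain which is a ℚ-algebra and α ∈ R. Then for every n ≥ 1, the n-th autonomous polynomial of the series e^{αX} = rescale α exp is A_n(rescale α exp) = α^{n−1} · (n−1)! · rescale (n·α) exp; that is, the autonomous operator sends the Hurwitz expansion of e^{αX} to the sequence (α^{n−1}(n−1)! e^{nαX})_{n≥1}. -/

import Mathlib

open PowerSeries

/-! Since `δ(e^{aX}) = a·e^{aX}` and `e^{αX}·e^{mαX} = e^{(m+1)αX}`, each application of
`g ↦ e^{αX}·δ(g)` to `c·e^{mαX}` yields `c·mα·e^{(m+1)αX}`; induction on `m` gives the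
coefficient `α^m·m!`. -/

/-- The autonomous polynomials of a power series: `A_1(f) = f` and
`A_{n+1}(f) = f·δ(A_n(f))`.  Here `autPolyPS f m` is `A_{m+1}(f)`. -/
noncomputable def autPolyPS {R : Type*} [CommRing R] (f : PowerSeries R) :
    ℕ → PowerSeries R
  | 0 => f
  | m + 1 => f * derivativeFun (autPolyPS f m)

namespace PowerSeries

theorem derivative_rescale {R : Type*} [CommSemiring R] (a : R) (f : R⟦X⟧) :
    d⁄dX R (rescale a f) = C a * rescale a (d⁄dX R f) := by
  ext n
  rw [coeff_C_mul, coeff_derivative, coeff_rescale, coeff_rescale, coeff_derivative, pow_succ]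
  ring

theorem derivative_rescale_exp {R : Type*} [CommRing R] [Algebra ℚ R] (a : R) :
    d⁄dX R (rescale a (exp R)) = C a * rescale a (exp R) := by
  rw [derivative_rescale, derivative_exp]

theorem derivative_C_mul {R : Type*} [CommSemiring R] (c : R) (f : R⟦X⟧) :
    d⁄dX R (C c * f) = C c * d⁄dX R f := by
  rw [← smul_eq_C_mul, ← smul_eq_C_mul, Derivation.map_smul]

end PowerSeries

set_option linter.deprecated false in
theorem autPolyPS_succ {R : Type*} [CommRing R] (f : R⟦X⟧) (m : ℕ) :
    autPolyPS f (m + 1) = f * d⁄dX R (autPolyPS f m) :=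
  rfl

theorem autPolyPS_rescale_exp {R : Type*} [CommRing R] [Algebra ℚ R] (α : R) (m : ℕ) :
    autPolyPS (rescale α (exp R)) m =
      C (α ^ m * m.factorial) * rescale (((m + 1 : ℕ) : R) * α) (exp R) := by
  induction m with
  | zero => simp [autPolyPS]
  | succ m ih =>
    rw [autPolyPS_succ, ih, derivative_C_mul, derivative_rescale_exp]
    calc rescale α (exp R) * (C (α ^ m * m.factorial) *
            (C (((m + 1 : ℕ) : R) * α) * rescale (((m + 1 : ℕ) : R) * α) (exp R)))
        = C (α ^ m * m.factorial * (((m + 1 : ℕ) : R) * α)) *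
            (rescale α (exp R) * rescale (((m + 1 : ℕ) : R) * α) (exp R)) := by
          simp only [map_mul]; ring
      _ = C (α ^ (m + 1) * (m + 1).factorial) *
            rescale (((m + 1 + 1 : ℕ) : R) * α) (exp R) := by
          rw [exp_mul_exp_eq_exp_add, Nat.factorial_succ]
          push_cast
          congr 1
          · congr 1; ring
          · congr 2; ring

theorem autPolyPS_exp_rescale_general {R : Type*} [CommRing R] [Algebra ℚ R] (α : R) :
    ∀ n : ℕ, 1 ≤ n →
      autPolyPS (rescale α (exp R)) (n - 1) =
        PowerSeries.C α ^ (n - 1) * ((n - 1).factorial : PowerSeries R) *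
          rescale ((n : R) * α) (exp R) := by
  intro n hn
  obtain ⟨m, rfl⟩ := Nat.exists_eq_add_of_le' hn
  rw [Nat.add_sub_cancel, autPolyPS_rescale_exp, map_mul, map_pow, map_natCast]

/-- For an integral domain `R` which is a `ℚ`-algebra and `α ∈ R`, the `n`-th autonomous
polynomial of `e^{αX} = rescale α exp` is `α^{n-1}·(n-1)!·e^{nαX}`. -/
theorem autPolyPS_exp_rescale {R : Type*} [CommRing R] [IsDomain R] [Algebra ℚ R] (α : R) :
    ∀ n : ℕ, 1 ≤ n →
      autPolyPS (rescale α (exp R)) (n - 1) =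
        PowerSeries.C α ^ (n - 1) * ((n - 1).factorial : PowerSeries R) *
          rescale ((n : R) * α) (exp R) :=
  autPolyPS_exp_rescale_general α
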